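/- arXiv:2501.05570 — 7 statements merged into one kernel-verified Lean document; each statement's English description precedes it below -/
import Mathlib

section
/- Every connected simple graph on n ≥ 2 vertices has a dominating set of size at most n/2. -/
/-!
Fix a root `r` and split the vertices by the parity of their distance to `r`. Every vertex
other than `r` has a neighbour one step closer to `r`, hence of the other parity, so each parity
class dominates the other one; `r` itself is dominated by the odd class because, with at least
two vertices, it has a neighbour. Both classes are therefore dominating, and the smaller one has
at most `n / 2` vertices.
-/

/-- `D` is a dominating set of `G`: every vertex is in `D` or adjacent to a vertex of `D`. -/
def IsDominatingSet {V : Type*} (G : SimpleGraph V) (D : Finset V) : Prop :=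
  ∀ v : V, v ∈ D ∨ ∃ u ∈ D, G.Adj u v

namespace SimpleGraph

variable {V : Type*} {G : SimpleGraph V}

theorem exists_adj_dist_add_one_eq {u v : V} (h : G.dist u v ≠ 0) :
    ∃ w, G.Adj w v ∧ G.dist u w + 1 = G.dist u v := by
  obtain ⟨p, hp⟩ := exists_walk_of_dist_ne_zero (dist_comm (G := G) ▸ h)
  have hnp : ¬p.Nil := fun hnil ↦ h (by rw [dist_comm, ← hp, hnil.length_eq_zero])
  have hadj : G.Adj p.snd v := (p.adj_snd hnp).symm
  have hle : G.dist u p.snd ≤ G.dist u v - 1 := by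
    rw [dist_comm, dist_comm (u := u), ← hp, ← p.length_tail_add_one hnp]
    exact (dist_le p.tail).trans (by omega)
  refine ⟨p.snd, hadj, ?_⟩
  rcases hadj.diff_dist_adj (u := u) with h' | h' | h' <;> omega

variable [Fintype V]

-- `G.dist r v = 0` also when `v` is unreachable from `r`, so such `v` lie in the even class.
theorem isDominatingSet_filter_even_dist (G : SimpleGraph V) (r : V) :
    IsDominatingSet G {v | Even (G.dist r v)} := by
  intro v
  by_cases hv : Even (G.dist r v)
  · exact .inl (by simpa using hv)
  · obtain ⟨u, hadj, hu⟩ := exists_adj_dist_add_one_eq (u := r) (v := v)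
      fun h0 ↦ hv (h0 ▸ Even.zero)
    refine .inr ⟨u, ?_, hadj⟩
    simp only [Finset.mem_filter, Finset.mem_univ, true_and]
    grind

theorem Preconnected.isDominatingSet_filter_odd_dist [Nontrivial V] (hG : G.Preconnected)
    (r : V) : IsDominatingSet G {v | Odd (G.dist r v)} := by
  intro v
  by_cases hv : Odd (G.dist r v)
  · exact .inl (by simpa using hv)
  right
  by_cases hvr : v = r
  · obtain ⟨u, hru⟩ := hG.exists_adj_of_nontrivial r
    exact ⟨u, by simp [dist_eq_one_iff_adj.mpr hru], hvr ▸ hru.symm⟩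
  · obtain ⟨u, hadj, hu⟩ := exists_adj_dist_add_one_eq (u := r) (v := v)
      ((hG r v).pos_dist_of_ne (Ne.symm hvr)).ne'
    refine ⟨u, ?_, hadj⟩
    simp only [Finset.mem_filter, Finset.mem_univ, true_and]
    grind

end SimpleGraph

open Finset SimpleGraph in
/-- Every connected simple graph on `n ≥ 2` vertices has a dominating set of size at most
`n / 2`. -/
theorem connected_exists_dominatingSet_card_le_half {V : Type*} [Fintype V]
    (G : SimpleGraph V) (hconn : G.Connected) (hn : 2 ≤ Fintype.card V) :
    ∃ D : Finset V, IsDominatingSet G D ∧ 2 * D.card ≤ Fintype.card V := by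
  have : Nontrivial V := Fintype.one_lt_card_iff_nontrivial.mp hn
  obtain ⟨r⟩ := hconn.nonempty
  have hcard : #{v | Even (G.dist r v)} + #{v | Odd (G.dist r v)} = Fintype.card V := by
    simp_rw [← Nat.not_even_iff_odd]
    exact Finset.card_filter_add_card_filter_not _
  rcases le_total #{v | Even (G.dist r v)} #{v | Odd (G.dist r v)} with h | h
  · exact ⟨_, isDominatingSet_filter_even_dist G r, by omega⟩
  · exact ⟨_, hconn.preconnected.isDominatingSet_filter_odd_dist r, by omega⟩
end

section
/- For every integer d ≥ 1, every d-regular simple graph on n vertices has a dominating set of size at most (H_{d+1}/(d+1))·n, where H_{d+1} = Σ_{j=1}^{d+1} 1/j is the (d+1)-st harmonic number. -/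
/-!
Greedy set cover with a harmonic potential (Johnson, Lovász). Repeatedly choose a closed
neighbourhood containing the most still-undominated vertices. For the set `U` of undominated
vertices, `Φ(U) = ∑_w H(|N[w] ∩ U|)` starts at `n · H_{d+1}`. If the chosen neighbourhood
dominates `t` new vertices, then `t` bounds every `|N[w] ∩ U|`, so the term of `w` drops by at
least `1/t` per newly dominated vertex of `N[w]`; as every vertex lies in `d + 1` closed
neighbourhoods, `Φ` drops by at least `d + 1` per chosen vertex.
-/

open Finset

theorem sub_le_mul_harmonic_sub_harmonic {s' s t : ℕ} (hs' : s' ≤ s) (hst : s ≤ t) :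
    (s - s' : ℚ) ≤ t * (harmonic s - harmonic s') := by
  induction s, hs' using Nat.le_induction with
  | base => simp
  | succ s hs' ih =>
    have hstep : (1 : ℚ) ≤ t * ((s : ℚ) + 1)⁻¹ := by
      rw [← div_eq_mul_inv, one_le_div (by positivity)]
      exact_mod_cast hst
    rw [harmonic_succ]
    push_cast
    linarith [ih (by omega)]

section SetCover

variable {ι α : Type*} [Fintype ι] [DecidableEq α] (S : ι → Finset α) {k : ℕ}

theorem card_mul_le_sum_card_inter {T : Finset α} (hT : ∀ a ∈ T, k ≤ #{i | a ∈ S i}) :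
    #T * k ≤ ∑ i, #(S i ∩ T) :=
  calc #T * k = #T • k := rfl
    _ ≤ ∑ a ∈ T, #(univ.bipartiteAbove (fun a i ↦ a ∈ S i) a) := card_nsmul_le_sum _ _ _ hT
    _ = ∑ i, #(T.bipartiteBelow (fun a i ↦ a ∈ S i) i) :=
      sum_card_bipartiteAbove_eq_sum_card_bipartiteBelow _
    _ = ∑ i, #(S i ∩ T) := by simp only [bipartiteBelow, filter_mem_eq_inter, inter_comm]

theorem le_sum_harmonic_sub_harmonic {U : Finset α} (hU : ∀ a ∈ U, k ≤ #{i | a ∈ S i}) {v : ι}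
    (hv : ∀ i, #(S i ∩ U) ≤ #(S v ∩ U)) (hvU : (S v ∩ U).Nonempty) :
    (k : ℚ) ≤ ∑ i, (harmonic #(S i ∩ U) - harmonic #(S i ∩ (U \ S v))) := by
  set t := #(S v ∩ U)
  have ht : (0 : ℚ) < t := by exact_mod_cast hvU.card_pos
  have hcount : t * k ≤ ∑ i, #(S i ∩ (U ∩ S v)) := by
    rw [show t = #(U ∩ S v) by rw [inter_comm]]
    exact card_mul_le_sum_card_inter S fun a ha ↦ hU a (mem_inter.1 ha).1
  have hdrop (i : ι) :
      (#(S i ∩ (U ∩ S v)) : ℚ) = #(S i ∩ U) - #(S i ∩ (U \ S v)) := by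
    rw [eq_sub_iff_add_eq', ← Nat.cast_add, ← inter_sdiff_assoc, ← inter_assoc,
      card_sdiff_add_card_inter]
  refine le_of_mul_le_mul_left ?_ ht
  calc (t * k : ℚ) ≤ ∑ i, (#(S i ∩ (U ∩ S v)) : ℚ) := by exact_mod_cast hcount
    _ = ∑ i, (#(S i ∩ U) - #(S i ∩ (U \ S v)) : ℚ) := sum_congr rfl fun i _ ↦ hdrop i
    _ ≤ ∑ i, t * (harmonic #(S i ∩ U) - harmonic #(S i ∩ (U \ S v))) :=
      sum_le_sum fun i _ ↦ sub_le_mul_harmonic_sub_harmonic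
        (card_le_card (inter_subset_inter_left sdiff_subset)) (hv i)
    _ = t * ∑ i, (harmonic #(S i ∩ U) - harmonic #(S i ∩ (U \ S v))) := by rw [mul_sum]

theorem exists_cover_mul_card_le_sum_harmonic (hk : 0 < k) (U : Finset α)
    (hU : ∀ a ∈ U, k ≤ #{i | a ∈ S i}) :
    ∃ D : Finset ι, (∀ a ∈ U, ∃ i ∈ D, a ∈ S i) ∧
      (k * #D : ℚ) ≤ ∑ i, harmonic #(S i ∩ U) := by
  classical
  induction U using Finset.strongInduction with
  | H U ih =>
  obtain rfl | ⟨a, ha⟩ := U.eq_empty_or_nonempty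
  · exact ⟨∅, by simp, by simp⟩
  obtain ⟨i, hai⟩ := card_pos.1 (hk.trans_le (hU a ha))
  obtain ⟨v, -, hv⟩ := exists_max_image univ (fun i ↦ #(S i ∩ U)) ⟨i, mem_univ i⟩
  have hvU : (S v ∩ U).Nonempty := card_pos.1 <|
    (card_pos.2 ⟨a, mem_inter.2 ⟨(mem_filter.1 hai).2, ha⟩⟩).trans_le (hv i (mem_univ i))
  obtain ⟨D, hDcover, hDcard⟩ := ih (U \ S v)
    (sdiff_lt_left.2 (not_disjoint_iff_nonempty_inter.2 hvU)) fun a ha ↦ hU a (mem_sdiff.1 ha).1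
  refine ⟨insert v D, fun a ha ↦ ?_, ?_⟩
  · by_cases hav : a ∈ S v
    · exact ⟨v, mem_insert_self v D, hav⟩
    · obtain ⟨j, hj, haj⟩ := hDcover a (mem_sdiff.2 ⟨ha, hav⟩)
      exact ⟨j, mem_insert_of_mem hj, haj⟩
  · have hdrop := le_sum_harmonic_sub_harmonic S hU (fun i ↦ hv i (mem_univ i)) hvU
    calc (k * #(insert v D) : ℚ) ≤ k * #D + k := by
          rw [← mul_add_one]
          gcongr
          exact_mod_cast card_insert_le v D
      _ ≤ ∑ i, harmonic #(S i ∩ (U \ S v)) +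
            ∑ i, (harmonic #(S i ∩ U) - harmonic #(S i ∩ (U \ S v))) := add_le_add hDcard hdrop
      _ = ∑ i, harmonic #(S i ∩ U) := by rw [← sum_add_distrib]; simp

end SetCover

namespace SimpleGraph

variable {V : Type*} [Fintype V] [DecidableEq V] (G : SimpleGraph V) [DecidableRel G.Adj]

def closedNeighborFinset (v : V) : Finset V := insert v (G.neighborFinset v)

theorem mem_closedNeighborFinset {u v : V} :
    u ∈ G.closedNeighborFinset v ↔ u = v ∨ G.Adj v u := by
  simp [closedNeighborFinset]

theorem card_closedNeighborFinset (v : V) : #(G.closedNeighborFinset v) = G.degree v + 1 := by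
  rw [closedNeighborFinset, card_insert_of_notMem (by simp), card_neighborFinset_eq_degree]

theorem filter_mem_closedNeighborFinset (v : V) :
    ({w | v ∈ G.closedNeighborFinset w} : Finset V) = G.closedNeighborFinset v := by
  ext w
  simp [mem_closedNeighborFinset, eq_comm, adj_comm]

end SimpleGraph

open SimpleGraph in
theorem regular_exists_dominatingSet_card_le_harmonic_general {V : Type*} [Fintype V] [DecidableEq V]
    (G : SimpleGraph V) [DecidableRel G.Adj] (d : ℕ)
    (hreg : ∀ v : V, G.degree v = d) :
    ∃ D : Finset V, IsDominatingSet G D ∧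
      (D.card : ℝ) ≤ (∑ j ∈ Finset.Icc 1 (d + 1), (1 : ℝ) / j) / (d + 1) * Fintype.card V := by
  obtain ⟨D, hcover, hcard⟩ := exists_cover_mul_card_le_sum_harmonic G.closedNeighborFinset
    d.add_one_pos univ fun v _ ↦ by
      rw [filter_mem_closedNeighborFinset, card_closedNeighborFinset, hreg]
  refine ⟨D, fun v ↦ ?_, ?_⟩
  · obtain ⟨u, hu, hvu⟩ := hcover v (mem_univ v)
    obtain rfl | hadj := G.mem_closedNeighborFinset.1 hvu
    exacts [Or.inl hu, Or.inr ⟨u, hu, hadj⟩]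
  · simp only [inter_univ, card_closedNeighborFinset, hreg, sum_const, card_univ,
      nsmul_eq_mul, Nat.cast_add, Nat.cast_one] at hcard
    have hH : ∑ j ∈ Icc 1 (d + 1), (1 : ℝ) / j = harmonic (d + 1) := by
      simp only [harmonic_eq_sum_Icc, one_div]
      push_cast
      rfl
    rw [hH, div_mul_eq_mul_div, le_div_iff₀ (by positivity)]
    exact_mod_cast (by linarith : (#D : ℚ) * (d + 1) ≤ harmonic (d + 1) * Fintype.card V)

/-- Every `d`-regular simple graph on `n` vertices (`d ≥ 1`) has a dominating set of size at
most `(H_{d+1}/(d+1)) · n`, where `H_{d+1}` is the `(d+1)`-st harmonic number. -/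
theorem regular_exists_dominatingSet_card_le_harmonic {V : Type*} [Fintype V] [DecidableEq V]
    (G : SimpleGraph V) [DecidableRel G.Adj] (d : ℕ) (hd : 1 ≤ d)
    (hreg : ∀ v : V, G.degree v = d) :
    ∃ D : Finset V, IsDominatingSet G D ∧
      (D.card : ℝ) ≤ (∑ j ∈ Finset.Icc 1 (d + 1), (1 : ℝ) / j) / (d + 1) * Fintype.card V :=
  regular_exists_dominatingSet_card_le_harmonic_general G d hreg
end

section
/- Let F be a field of characteristic two, let A be an n×n symmetric matrix over F with zero diagonal, and let B be a k×n matrix over F with k ≤ n. Then B·A·Bᵀ is again symmetric with zero diagonal, and Pf(B·A·Bᵀ) = Σ_{S ⊆ [n], |S| = k} det(B[·,S]) · Pf(A[S,S]), where B[·,S] is the k×k submatrix of B consisting of the columns indexed by S, and A[S,S] is the principal submatrix of A on the rows and columns indexed by S. -/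
open Matrix

/-- `M` is a perfect matching of the finite set `V`, encoded as a finset of unordered pairs:
no pair is a loop, and every element of `V` lies in exactly one pair of `M`. -/
def IsPerfectMatchingOn {V : Type*} (M : Finset (Sym2 V)) : Prop :=
  (∀ e ∈ M, ¬ e.IsDiag) ∧ ∀ v : V, ∃! e : Sym2 V, e ∈ M ∧ v ∈ e

open scoped Classical in
/-- The Pfaffian of a symmetric matrix `A` (over a field of characteristic two, where no sign
is needed): the sum over all perfect matchings `M` of the index set of the products
`∏_{{u,v} ∈ M} A u v`. -/
noncomputable def pfaffian {V F : Type*} [Fintype V] [DecidableEq V] [CommRing F]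
    (A : Matrix V V F) (hA : A.IsSymm) : F :=
  ∑ M ∈ Finset.univ.filter (fun M : Finset (Sym2 V) => IsPerfectMatchingOn M),
    ∏ e ∈ M, Sym2.lift ⟨fun u v => A u v, fun u v => hA.apply v u⟩ e

/-!
Expanding each entry of `B A Bᵀ` inside the product over a perfect matching, and using that a
perfect matching identifies maps `V → ι` with maps `M → ι × ι`, gives
`Pf (B A Bᵀ) = ∑_{g : [k] → [n]} (∏ᵥ B v (g v)) Pf (A[g, g])` over any commutative ring.
In characteristic two only injective `g` contribute: if `g u = g v` with `u ≠ v`, the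
transposition of `u` and `v` pairs off matchings of equal weight, and the matchings it fixes
contain the edge `{u, v}`, of weight `A (g u) (g u) = 0`. An injective `g` is uniquely
`φ_S ∘ σ`, with `φ_S` the increasing enumeration of its image `S` and `σ` a permutation;
since the Pfaffian is invariant under reindexing, summing over `σ` produces the permanent of
`B[·, S]`, which in characteristic two is its determinant.
-/

open Finset Function

namespace Matrix

theorem mul_mul_transpose_apply {V ι R : Type*} [Fintype ι] [CommSemiring R]
    (A : Matrix ι ι R) (B : Matrix V ι R) (u w : V) :
    (B * A * Bᵀ) u w = ∑ i, ∑ j, B u i * A i j * B w j := by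
  simp only [mul_apply, transpose_apply, sum_mul]
  exact sum_comm

theorem IsSymm.mul_mul_transpose {m n R : Type*} [Fintype n] [CommSemiring R]
    {A : Matrix n n R} (hA : A.IsSymm) (B : Matrix m n R) : (B * A * Bᵀ).IsSymm := by
  rw [IsSymm, transpose_mul, transpose_mul, transpose_transpose, hA.eq, Matrix.mul_assoc]

end Matrix

theorem CharTwo.sum_sum_eq_zero_of_symm {ι R : Type*} [Fintype ι] [Ring R] [CharP R 2]
    {f : ι → ι → R} (hsymm : ∀ i j, f i j = f j i) (hdiag : ∀ i, f i i = 0) :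
    ∑ i, ∑ j, f i j = 0 := by
  rw [← Fintype.sum_prod_type' f]
  refine sum_involution (fun p _ => p.swap) (fun p _ => ?_) (fun p _ hp hswap => hp ?_)
    (fun p _ => mem_univ _) (fun p _ => p.swap_swap)
  · rw [Prod.fst_swap, Prod.snd_swap, hsymm p.2, CharTwo.add_self_eq_zero]
  · rw [← congrArg Prod.fst hswap]
    exact hdiag p.2

namespace Matrix

variable {m n R : Type*} [Fintype n] [CommRing R] [CharP R 2]

theorem IsSymm.mul_mul_transpose_apply_self_eq_zero {A : Matrix n n R} (hA : A.IsSymm)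
    (hdiag : ∀ i, A i i = 0) (B : Matrix m n R) (i : m) : (B * A * Bᵀ) i i = 0 := by
  rw [mul_mul_transpose_apply]
  refine CharTwo.sum_sum_eq_zero_of_symm (fun j l => ?_) fun j => by
    rw [hdiag, mul_zero, zero_mul]
  rw [hA.apply]
  ring

theorem det_eq_permanent [DecidableEq n] (M : Matrix n n R) : M.det = M.permanent := by
  rw [det_apply, permanent]
  refine sum_congr rfl fun σ _ => ?_
  rcases Int.units_eq_one_or (Equiv.Perm.sign σ) with h | h <;>
    simp [h, Units.smul_def, CharTwo.neg_eq]

end Matrix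

namespace Matrix.IsSymm

variable {V W R : Type*} {A : Matrix V V R}

def sym2Entry (hA : A.IsSymm) : Sym2 V → R :=
  Sym2.lift ⟨fun u v => A u v, fun u v => hA.apply v u⟩

@[simp]
theorem sym2Entry_mk (hA : A.IsSymm) (u v : V) : hA.sym2Entry s(u, v) = A u v := rfl

theorem sym2Entry_eq_out (hA : A.IsSymm) (e : Sym2 V) : hA.sym2Entry e = A e.out.1 e.out.2 := by
  conv_lhs => rw [← Quot.out_eq e]
  rfl

theorem sym2Entry_submatrix (hA : A.IsSymm) (f : W → V) (e : Sym2 W) :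
    (hA.submatrix f).sym2Entry e = hA.sym2Entry (e.map f) := by
  induction e using Sym2.ind
  rfl

theorem prod_image_sym2Entry [DecidableEq V] [CommMonoid R] (hA : A.IsSymm) {f : W → V}
    (hf : Injective f) (M : Finset (Sym2 W)) :
    ∏ e ∈ M.image (Sym2.map f), hA.sym2Entry e = ∏ e ∈ M, (hA.submatrix f).sym2Entry e := by
  rw [prod_image fun _ _ _ _ h => Sym2.map.injective hf h]
  exact prod_congr rfl fun e _ => (sym2Entry_submatrix hA f e).symm

end Matrix.IsSymm

open scoped Classical in
theorem pfaffian_eq_sum_prod_sym2Entry {V R : Type*} [Fintype V] [DecidableEq V] [CommRing R]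
    (A : Matrix V V R) (hA : A.IsSymm) :
    pfaffian A hA = ∑ M ∈ univ.filter (fun M : Finset (Sym2 V) => IsPerfectMatchingOn M),
      ∏ e ∈ M, hA.sym2Entry e := rfl

theorem Finset.image_sym2Map_symm_image_sym2Map {V W : Type*} [DecidableEq V] [DecidableEq W]
    (f : W ≃ V) (M : Finset (Sym2 W)) :
    (M.image (Sym2.map f)).image (Sym2.map f.symm) = M := by
  simp [image_image, Sym2.map_map, comp_def, Sym2.map_id']

namespace IsPerfectMatchingOn

variable {V W : Type*} {M : Finset (Sym2 W)}

theorem eq_of_mem (hM : IsPerfectMatchingOn M) {v : W} {e e' : Sym2 W} (he : e ∈ M) (hv : v ∈ e)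
    (he' : e' ∈ M) (hv' : v ∈ e') : e = e' :=
  (hM.2 v).unique ⟨he, hv⟩ ⟨he', hv'⟩

theorem image_equiv [DecidableEq V] (hM : IsPerfectMatchingOn M) (f : W ≃ V) :
    IsPerfectMatchingOn (M.image (Sym2.map f)) := by
  refine ⟨?_, fun v => ?_⟩
  · simp only [mem_image, forall_exists_index, and_imp, forall_apply_eq_imp_iff₂]
    intro e he
    rw [Sym2.isDiag_map f.injective]
    exact hM.1 e he
  · obtain ⟨e, ⟨he, hve⟩, huniq⟩ := hM.2 (f.symm v)
    refine ⟨e.map f, ⟨mem_image_of_mem _ he, Sym2.mem_map.mpr ⟨_, hve, f.apply_symm_apply v⟩⟩, ?_⟩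
    rintro _ ⟨hfe', hv'⟩
    obtain ⟨e', he', rfl⟩ := mem_image.mp hfe'
    obtain ⟨a, ha, rfl⟩ := Sym2.mem_map.mp hv'
    rw [huniq e' ⟨he', by simpa using ha⟩]

theorem mk_mem_of_image_swap_eq [DecidableEq W] (hM : IsPerfectMatchingOn M) {u v : W}
    (huv : u ≠ v) (hfix : M.image (Sym2.map (Equiv.swap u v)) = M) : s(u, v) ∈ M := by
  obtain ⟨e, ⟨he, hue⟩, -⟩ := hM.2 u
  obtain ⟨a, rfl⟩ := Sym2.mem_iff_exists.mp hue
  obtain rfl | hav := eq_or_ne a v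
  · exact he
  have hau : a ≠ u := fun h => hM.1 _ he (Sym2.mk_isDiag_iff.mpr h.symm)
  have hva : s(v, a) ∈ M := by
    rw [← hfix]
    refine mem_image.mpr ⟨s(u, a), he, ?_⟩
    simp [Equiv.swap_apply_of_ne_of_ne hau hav]
  have := hM.eq_of_mem he (Sym2.mem_mk_right u a) hva (Sym2.mem_mk_right v a)
  simp [hau.symm, huv] at this

theorem bijective_endpoint (hM : IsPerfectMatchingOn M) :
    Bijective fun p : M × Bool => if p.2 then p.1.1.out.2 else p.1.1.out.1 := by
  have hmem : ∀ p : M × Bool, (if p.2 then p.1.1.out.2 else p.1.1.out.1) ∈ p.1.1 := by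
    rintro ⟨e, _ | _⟩
    exacts [e.1.out_fst_mem, e.1.out_snd_mem]
  refine ⟨fun p q hpq => ?_, fun v => ?_⟩
  · dsimp only at hpq
    have hpq₁ : p.1 = q.1 :=
      Subtype.ext (hM.eq_of_mem p.1.2 (hmem p) q.1.2 (hpq ▸ hmem q))
    obtain ⟨⟨e, he⟩, b⟩ := p
    obtain ⟨⟨e', he'⟩, b'⟩ := q
    obtain rfl : e = e' := congrArg Subtype.val hpq₁
    have hne : e.out.1 ≠ e.out.2 := fun h =>
      hM.1 e he (by rw [← Quot.out_eq e]; exact Sym2.mk_isDiag_iff.mpr h)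
    cases b <;> cases b' <;> simp only [Bool.false_eq_true, ↓reduceIte] at hpq
    exacts [rfl, absurd hpq hne, absurd hpq.symm hne, rfl]
  · obtain ⟨e, ⟨he, hv⟩, -⟩ := hM.2 v
    rw [← Quot.out_eq e] at hv
    rcases Sym2.mem_iff.mp hv with rfl | rfl
    exacts [⟨(⟨e, he⟩, false), rfl⟩, ⟨(⟨e, he⟩, true), rfl⟩]

noncomputable def endpointEquiv (hM : IsPerfectMatchingOn M) : M × Bool ≃ W :=
  Equiv.ofBijective _ hM.bijective_endpoint

@[simp]
theorem endpointEquiv_false (hM : IsPerfectMatchingOn M) (e : M) :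
    hM.endpointEquiv (e, false) = e.1.out.1 := rfl

@[simp]
theorem endpointEquiv_true (hM : IsPerfectMatchingOn M) (e : M) :
    hM.endpointEquiv (e, true) = e.1.out.2 := rfl

theorem prod_mul_mul_transpose_apply {ι R : Type*} [Fintype W] [DecidableEq W] [Fintype ι]
    [CommSemiring R] (hM : IsPerfectMatchingOn M) (A : Matrix ι ι R) (B : Matrix W ι R) :
    ∏ e ∈ M, (B * A * Bᵀ) e.out.1 e.out.2 =
      ∑ g : W → ι, (∏ v, B v (g v)) * ∏ e ∈ M, A (g e.out.1) (g e.out.2) := by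
  set E := hM.endpointEquiv
  let Φ : (M → Bool → ι) ≃ (W → ι) :=
    (Equiv.curry M Bool ι).symm.trans (E.arrowCongr (Equiv.refl ι))
  have hΦ : ∀ h e, Φ h e.1.out.1 = h e false ∧ Φ h e.1.out.2 = h e true := fun h e =>
    ⟨congrArg (uncurry h) (E.symm_apply_apply (e, false)),
      congrArg (uncurry h) (E.symm_apply_apply (e, true))⟩
  rw [← Φ.sum_comp]
  calc ∏ e ∈ M, (B * A * Bᵀ) e.out.1 e.out.2
      = ∏ e : M, ∑ x : Bool → ι,
          B e.1.out.1 (x false) * A (x false) (x true) * B e.1.out.2 (x true) := by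
        rw [← prod_coe_sort]
        refine prod_congr rfl fun e _ => ?_
        rw [mul_mul_transpose_apply, ← (Equiv.boolArrowEquivProd ι).symm.sum_comp,
          Fintype.sum_prod_type]
        rfl
    _ = ∑ h : M → Bool → ι, ∏ e,
          B e.1.out.1 (h e false) * A (h e false) (h e true) * B e.1.out.2 (h e true) :=
        Fintype.prod_sum _
    _ = _ := by
        refine sum_congr rfl fun h _ => ?_
        rw [← E.prod_comp, Fintype.prod_prod_type, ← prod_coe_sort M, ← prod_mul_distrib]
        refine prod_congr rfl fun e _ => ?_
        simp only [Fintype.prod_bool, E, hM.endpointEquiv_false, hM.endpointEquiv_true, hΦ]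
        ring

end IsPerfectMatchingOn

section Pfaffian

variable {V W ι R : Type*} [Fintype V] [DecidableEq V] [CommRing R]

theorem pfaffian_submatrix_equiv [Fintype W] [DecidableEq W] (A : Matrix V V R)
    (hA : A.IsSymm) (f : W ≃ V) : pfaffian (A.submatrix f f) (hA.submatrix f) = pfaffian A hA := by
  classical
  rw [pfaffian_eq_sum_prod_sym2Entry, pfaffian_eq_sum_prod_sym2Entry]
  refine sum_nbij' (fun M => M.image (Sym2.map f)) (fun M => M.image (Sym2.map f.symm))
    ?_ ?_ (fun M _ => M.image_sym2Map_symm_image_sym2Map f)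
    (fun M _ => by simpa using M.image_sym2Map_symm_image_sym2Map f.symm) ?_
  · simp only [mem_filter, mem_univ, true_and]
    exact fun M hM => hM.image_equiv f
  · simp only [mem_filter, mem_univ, true_and]
    exact fun M hM => hM.image_equiv f.symm
  · exact fun M _ => (hA.prod_image_sym2Entry f.injective M).symm

theorem pfaffian_submatrix_eq_zero_of_not_injective [CharP R 2] (A : Matrix ι ι R)
    (hA : A.IsSymm) (hdiag : ∀ i, A i i = 0) {g : V → ι} (hg : ¬ Injective g) :
    pfaffian (A.submatrix g g) (hA.submatrix g) = 0 := by
  classical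
  obtain ⟨u, v, hguv, huv⟩ : ∃ u v, g u = g v ∧ u ≠ v := by
    simpa [Injective, not_forall] using hg
  set τ := Equiv.swap u v
  have hgτ : g ∘ τ = g := by
    ext x
    simp only [Function.comp_apply, τ, Equiv.swap_apply_def]
    split_ifs <;> simp_all
  have hweight : ∀ M : Finset (Sym2 V), ∏ e ∈ M.image (Sym2.map τ), (hA.submatrix g).sym2Entry e
      = ∏ e ∈ M, (hA.submatrix g).sym2Entry e := fun M => by
    rw [(hA.submatrix g).prod_image_sym2Entry τ.injective]
    simp only [(hA.submatrix g).sym2Entry_submatrix, hA.sym2Entry_submatrix, Sym2.map_map, hgτ]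
  rw [pfaffian_eq_sum_prod_sym2Entry]
  refine sum_involution (fun M _ => M.image (Sym2.map τ)) ?_ ?_ ?_ ?_
  · intro M _
    rw [hweight, CharTwo.add_self_eq_zero]
  · intro M hM hne hfix
    simp only [mem_filter, mem_univ, true_and] at hM
    refine hne (prod_eq_zero (hM.mk_mem_of_image_swap_eq huv hfix) ?_)
    rw [Matrix.IsSymm.sym2Entry_mk, submatrix_apply, hguv, hdiag]
  · simp only [mem_filter, mem_univ, true_and]
    exact fun M hM => hM.image_equiv τ
  · intro M _
    simpa [τ] using M.image_sym2Map_symm_image_sym2Map τ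

theorem pfaffian_mul_mul_transpose [Fintype ι] (A : Matrix ι ι R) (hA : A.IsSymm)
    (B : Matrix V ι R) (h : (B * A * Bᵀ).IsSymm) :
    pfaffian (B * A * Bᵀ) h =
      ∑ g : V → ι, (∏ v, B v (g v)) * pfaffian (A.submatrix g g) (hA.submatrix g) := by
  classical
  simp only [pfaffian_eq_sum_prod_sym2Entry, Matrix.IsSymm.sym2Entry_eq_out, mul_sum]
  rw [sum_comm]
  exact sum_congr rfl fun M hM => (mem_filter.mp hM).2.prod_mul_mul_transpose_apply A B

end Pfaffian

theorem exists_perm_comp_eq {ι α : Type*} [Finite ι] {φ g : ι → α} (hg : Injective g)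
    (h : Set.range g ⊆ Set.range φ) : ∃ σ : Equiv.Perm ι, φ ∘ σ = g := by
  choose σ hσ using fun i => h (Set.mem_range_self i)
  have hσinj : Injective σ := fun a b hab => hg (by rw [← hσ a, ← hσ b, hab])
  exact ⟨Equiv.ofBijective σ hσinj.bijective_of_finite, funext hσ⟩

theorem Fintype.sum_eq_sum_powersetCard_perm {α M : Type*} [Fintype α] [LinearOrder α]
    [AddCommMonoid M] {k : ℕ} (G : (Fin k → α) → M) (hG : ∀ g, ¬ Injective g → G g = 0) :
    ∑ g, G g = ∑ S ∈ (univ.powersetCard k : Finset (Finset α)).attach,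
      ∑ σ : Equiv.Perm (Fin k), G (S.1.orderEmbOfFin (mem_powersetCard.mp S.2).2 ∘ σ) := by
  classical
  rw [← sum_filter_of_ne fun g _ hg => by_contra fun h => hg (hG g h), ← sum_product']
  symm
  refine sum_bij (fun x _ => x.1.1.orderEmbOfFin _ ∘ x.2) (fun x _ => ?_) ?_ ?_ fun _ _ => rfl
  · exact mem_filter.mpr ⟨mem_univ _, (x.1.1.orderEmbOfFin _).injective.comp x.2.injective⟩
  · rintro ⟨⟨S, hS⟩, σ⟩ _ ⟨⟨T, hT⟩, τ⟩ _ hφ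
    have hrange := congrArg Set.range hφ
    simp only [EquivLike.range_comp, range_orderEmbOfFin, coe_inj] at hrange
    subst hrange
    simp only [Prod.mk.injEq, true_and]
    exact Equiv.ext fun i => (S.orderEmbOfFin _).injective (congrFun hφ i)
  · intro g hg
    have hg := (mem_filter.mp hg).2
    have hcard : (univ.image g).card = k := by rw [card_image_of_injective _ hg, Finset.card_fin]
    obtain ⟨σ, hσ⟩ := exists_perm_comp_eq hg (φ := (univ.image g).orderEmbOfFin hcard) (by simp)
    exact ⟨(⟨univ.image g, mem_powersetCard.mpr ⟨subset_univ _, hcard⟩⟩, σ),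
      mem_product.mpr ⟨mem_attach _ _, mem_univ _⟩, hσ⟩


theorem pfaffian_ishikawa_wakayama_general {F : Type*} [Field F] [CharP F 2]
    (n k : ℕ)
    (A : Matrix (Fin n) (Fin n) F) (hA : A.IsSymm) (hdiag : ∀ i, A i i = 0)
    (B : Matrix (Fin k) (Fin n) F) :
    (B * A * Bᵀ).IsSymm ∧ (∀ i, (B * A * Bᵀ) i i = 0) ∧
      ∀ h : (B * A * Bᵀ).IsSymm,
        pfaffian (B * A * Bᵀ) h =
          ∑ S ∈ (Finset.univ.powersetCard k : Finset (Finset (Fin n))).attach,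
            (B.submatrix id
                (S.1.orderEmbOfFin (Finset.mem_powersetCard.mp S.2).2)).det *
              pfaffian
                (A.submatrix (S.1.orderEmbOfFin (Finset.mem_powersetCard.mp S.2).2)
                  (S.1.orderEmbOfFin (Finset.mem_powersetCard.mp S.2).2))
                (hA.submatrix _) := by
  refine ⟨hA.mul_mul_transpose B, hA.mul_mul_transpose_apply_self_eq_zero hdiag B, fun h => ?_⟩
  rw [pfaffian_mul_mul_transpose A hA B h, Fintype.sum_eq_sum_powersetCard_perm _ fun g hg => by
    rw [pfaffian_submatrix_eq_zero_of_not_injective A hA hdiag hg, mul_zero]]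
  refine sum_congr rfl fun S _ => ?_
  rw [Matrix.det_eq_permanent, ← Matrix.permanent_transpose, Matrix.permanent, sum_mul]
  exact sum_congr rfl fun σ _ => congrArg _ (pfaffian_submatrix_equiv _ (hA.submatrix _) σ)

/-- The Ishikawa–Wakayama formula over a field of characteristic two: if `A` is an `n × n`
symmetric matrix with zero diagonal and `B` is a `k × n` matrix with `k ≤ n`, then `B * A * Bᵀ`
is again symmetric with zero diagonal, and its Pfaffian equals
`∑_{S ⊆ [n], |S| = k} det B[·, S] · Pf A[S, S]`. -/
theorem pfaffian_ishikawa_wakayama {F : Type*} [Field F] [CharP F 2]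
    (n k : ℕ) (hkn : k ≤ n)
    (A : Matrix (Fin n) (Fin n) F) (hA : A.IsSymm) (hdiag : ∀ i, A i i = 0)
    (B : Matrix (Fin k) (Fin n) F) :
    (B * A * Bᵀ).IsSymm ∧ (∀ i, (B * A * Bᵀ) i i = 0) ∧
      ∀ h : (B * A * Bᵀ).IsSymm,
        pfaffian (B * A * Bᵀ) h =
          ∑ S ∈ (Finset.univ.powersetCard k : Finset (Finset (Fin n))).attach,
            (B.submatrix id
                (S.1.orderEmbOfFin (Finset.mem_powersetCard.mp S.2).2)).det *
              pfaffian
                (A.submatrix (S.1.orderEmbOfFin (Finset.mem_powersetCard.mp S.2).2)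
                  (S.1.orderEmbOfFin (Finset.mem_powersetCard.mp S.2).2))
                (hA.submatrix _) :=
  pfaffian_ishikawa_wakayama_general n k A hA hdiag B
end

section
/- Let F be a field, let X be a finite set of variables partitioned into parts X_1, …, X_p, let c_1, …, c_p ≥ 1 be integers, and let P be a multivariate polynomial over F in X such that every monomial appearing in P has degree exactly c_i when restricted to the variables in X_i, for each i ∈ [p]. Then P contains a multilinear monomial m with |supp(m) ∩ X_i| = c_i for every i ∈ [p] if and only if P contains a monomial m with |osupp(m) ∩ X_i| ≥ c_i − 1 for every i ∈ [p]. -/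
/-!
A monomial has at most as many odd exponents in a part as its degree there, and the two numbers
have the same parity. So if the odd support misses the degree `c` by at most one, the two agree;
then each odd exponent contributes exactly `1` to the degree and the even exponents contribute
nothing, i.e. the monomial is multilinear on that part with support of size `c`.
-/

open Finset

lemma Nat.ite_odd_one_zero_le (n : ℕ) : (if Odd n then 1 else 0) ≤ n := by
  split_ifs with h
  exacts [h.pos, Nat.zero_le _]

namespace Finset

variable {ι : Type*} (s : Finset ι) (d : ι → ℕ)

lemma card_filter_odd_le_sum : #{x ∈ s | Odd (d x)} ≤ ∑ x ∈ s, d x := by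
  rw [card_filter]
  exact sum_le_sum fun x _ => Nat.ite_odd_one_zero_le (d x)

lemma card_filter_odd_eq_sum_of_sum_sub_one_le (h : ∑ x ∈ s, d x - 1 ≤ #{x ∈ s | Odd (d x)}) :
    #{x ∈ s | Odd (d x)} = ∑ x ∈ s, d x := by
  have hle := card_filter_odd_le_sum s d
  have hpar := even_sum_iff_even_card_odd (s := s) d
  rw [Nat.even_iff, Nat.even_iff] at hpar
  omega

variable {s d}

lemma le_one_of_card_filter_odd_eq_sum (h : #{x ∈ s | Odd (d x)} = ∑ x ∈ s, d x) :
    ∀ x ∈ s, d x ≤ 1 := by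
  rw [card_filter] at h
  intro x hx
  rw [← (sum_eq_sum_iff_of_le fun y _ => Nat.ite_odd_one_zero_le (d y)).1 h x hx]
  split_ifs <;> omega

lemma filter_odd_eq_filter_pos_of_le_one (h : ∀ x ∈ s, d x ≤ 1) :
    {x ∈ s | Odd (d x)} = {x ∈ s | 0 < d x} :=
  filter_congr fun x hx => by
    have := h x hx
    rw [Nat.odd_iff]
    omega

end Finset

theorem multilinear_monomial_iff_oddSupport_monomial_general {F : Type*} [Field F]
    {X : Type*}
    (p : ℕ) (parts : Fin p → Finset X)
    (hcover : ∀ x : X, ∃ i : Fin p, x ∈ parts i)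
    (c : Fin p → ℕ)
    (P : MvPolynomial X F)
    (hP : ∀ d ∈ P.support, ∀ i, ∑ x ∈ parts i, d x = c i) :
    (∃ d ∈ P.support, (∀ x : X, d x ≤ 1) ∧
        ∀ i, ((parts i).filter (fun x => 0 < d x)).card = c i) ↔
      (∃ d ∈ P.support, ∀ i, c i - 1 ≤ ((parts i).filter (fun x => Odd (d x))).card) := by
  constructor
  · rintro ⟨d, hd, hle, hcard⟩
    refine ⟨d, hd, fun i => ?_⟩
    rw [filter_odd_eq_filter_pos_of_le_one fun x _ => hle x, hcard i]
    exact Nat.sub_le _ _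
  · rintro ⟨d, hd, hodd⟩
    have hodd_eq i : #{x ∈ parts i | Odd (d x)} = ∑ x ∈ parts i, d x :=
      card_filter_odd_eq_sum_of_sum_sub_one_le _ _ (hP d hd i ▸ hodd i)
    have hle i : ∀ x ∈ parts i, d x ≤ 1 := le_one_of_card_filter_odd_eq_sum (hodd_eq i)
    refine ⟨d, hd, fun x => ?_, fun i => ?_⟩
    · obtain ⟨i, hi⟩ := hcover x
      exact hle i x hi
    · rw [← filter_odd_eq_filter_pos_of_le_one (hle i), hodd_eq i, hP d hd i]

/-- Let `X` be a finite set of variables partitioned into parts `X_1, …, X_p` with integers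
`c_i ≥ 1`, and let `P` be a polynomial each of whose monomials has degree exactly `c_i` when
restricted to `X_i`.  Then `P` contains a multilinear monomial whose support meets each `X_i`
in exactly `c_i` variables if and only if `P` contains a monomial whose odd support meets each
`X_i` in at least `c_i − 1` variables. -/
theorem multilinear_monomial_iff_oddSupport_monomial {F : Type*} [Field F]
    {X : Type*} [Fintype X] [DecidableEq X]
    (p : ℕ) (parts : Fin p → Finset X)
    (hdisj : ∀ i j : Fin p, i ≠ j → Disjoint (parts i) (parts j))
    (hcover : ∀ x : X, ∃ i : Fin p, x ∈ parts i)
    (c : Fin p → ℕ) (hc : ∀ i, 1 ≤ c i)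
    (P : MvPolynomial X F)
    (hP : ∀ d ∈ P.support, ∀ i, ∑ x ∈ parts i, d x = c i) :
    (∃ d ∈ P.support, (∀ x : X, d x ≤ 1) ∧
        ∀ i, ((parts i).filter (fun x => 0 < d x)).card = c i) ↔
      (∃ d ∈ P.support, ∀ i, c i - 1 ≤ ((parts i).filter (fun x => Odd (d x))).card) :=
  multilinear_monomial_iff_oddSupport_monomial_general p parts hcover c P hP
end

section
/- Let G = (V, E) be a simple graph, k ≥ 1 an integer, with lists L_f ⊆ {1, …, k} for each f ∈ E. Let e = {v, w} ∈ E and let V_T ⊆ V be a set of vertices with w ∈ V_T and v ∉ V_T, such that e is the unique edge of G with exactly one endpoint in V_T, and the induced subgraph G[V_T ∪ {v}] is a tree. Define L'_e = { i ∈ L_e : the tree G[V_T ∪ {v}] admits a proper list edge coloring with respect to the lists in which e has list {i} and every other edge f keeps L_f }. Let G' be the induced subgraph of G on the vertex set (V ∖ V_T) ∪ {w}. Then G admits a proper list edge coloring with respect to the lists L_f if and only if G' admits a proper list edge coloring with respect to the lists in which e has list L'_e and every other edge f of G' keeps L_f. -/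
/-- `G` admits a proper list edge coloring with respect to the lists `L`: each edge `e` of `G`
can be assigned a color from `L e` so that distinct edges sharing a common endpoint receive
different colors. -/
def HasProperListEdgeColoring {V : Type*} (G : SimpleGraph V) (k : ℕ)
    (L : Sym2 V → Finset (Fin k)) : Prop :=
  ∃ c : Sym2 V → Fin k, (∀ e ∈ G.edgeSet, c e ∈ L e) ∧
    ∀ e₁ ∈ G.edgeSet, ∀ e₂ ∈ G.edgeSet,
      e₁ ≠ e₂ → (∃ x : V, x ∈ e₁ ∧ x ∈ e₂) → c e₁ ≠ c e₂

/-!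
Put `A = V_T ∪ {v}` and `B = V_Tᶜ ∪ {w}`. Every edge of `G` lies inside `A` or inside `B`, both
contain `e = s(v, w)`, and an edge inside `A` that meets an edge not inside `A` is `e` itself.
Hence a coloring of `G` restricts to both sides, `e` getting a color of `L'`. Conversely, a
coloring of `B` giving `e` the color `i ∈ L'` and a coloring of `A` giving `e` the same color glue
to a coloring of `G`: every conflict across the two sides involves `e`, and is excluded in `B`.
-/

section ProperEdgeColoring

variable {V W α : Type*}

def IsProperEdgeColoringOn (F : Set (Sym2 V)) (c : Sym2 V → α) : Prop :=
  ∀ e₁ ∈ F, ∀ e₂ ∈ F, e₁ ≠ e₂ → (∃ x : V, x ∈ e₁ ∧ x ∈ e₂) → c e₁ ≠ c e₂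

theorem IsProperEdgeColoringOn.mono {F F' : Set (Sym2 V)} {c : Sym2 V → α}
    (h : IsProperEdgeColoringOn F c) (hF : F' ⊆ F) : IsProperEdgeColoringOn F' c :=
  fun e₁ he₁ e₂ he₂ => h e₁ (hF he₁) e₂ (hF he₂)

theorem isProperEdgeColoringOn_image_iff {f : V → W} (hf : Function.Injective f)
    {F : Set (Sym2 V)} {c : Sym2 W → α} :
    IsProperEdgeColoringOn (Sym2.map f '' F) c ↔ IsProperEdgeColoringOn F (c ∘ Sym2.map f) := by
  have hmap := Sym2.map.injective hf
  simp only [IsProperEdgeColoringOn, Set.forall_mem_image, Function.comp_apply, hmap.ne_iff]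
  refine forall₄_congr fun e₁ _ e₂ _ => imp_congr_right fun _ => imp_congr_left ?_
  constructor
  · rintro ⟨x, hx₁, hx₂⟩
    obtain ⟨y, hy₁, rfl⟩ := Sym2.mem_map.mp hx₁
    obtain ⟨z, hz₂, hzy⟩ := Sym2.mem_map.mp hx₂
    exact ⟨y, hy₁, hf hzy ▸ hz₂⟩
  · rintro ⟨x, hx₁, hx₂⟩
    exact ⟨f x, Sym2.mem_map.mpr ⟨x, hx₁, rfl⟩, Sym2.mem_map.mpr ⟨x, hx₂, rfl⟩⟩

theorem IsProperEdgeColoringOn.piecewise {F₁ F₂ : Set (Sym2 V)} {e : Sym2 V}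
    {c₁ c₂ : Sym2 V → α} [DecidablePred (· ∈ F₁)]
    (h₁ : IsProperEdgeColoringOn F₁ c₁) (h₂ : IsProperEdgeColoringOn F₂ c₂)
    (he : e ∈ F₂) (hce : c₁ e = c₂ e)
    (hsep : ∀ f₁ ∈ F₁, ∀ f₂ ∈ F₂, f₂ ∉ F₁ → (∃ x : V, x ∈ f₁ ∧ x ∈ f₂) → f₁ = e) :
    IsProperEdgeColoringOn (F₁ ∪ F₂) (F₁.piecewise c₁ c₂) := by
  have mixed : ∀ f₁ ∈ F₁, ∀ f₂ ∈ F₁ ∪ F₂, f₂ ∉ F₁ → f₁ ≠ f₂ → (∃ x : V, x ∈ f₁ ∧ x ∈ f₂) →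
      c₁ f₁ ≠ c₂ f₂ := by
    intro f₁ hf₁ f₂ hf₂ hf₂₁ hne hx
    have hf₂ : f₂ ∈ F₂ := hf₂.resolve_left hf₂₁
    obtain rfl := hsep f₁ hf₁ f₂ hf₂ hf₂₁ hx
    exact hce ▸ h₂ _ he f₂ hf₂ hne hx
  intro f₁ hf₁ f₂ hf₂ hne hx
  by_cases h₁₁ : f₁ ∈ F₁ <;> by_cases h₂₁ : f₂ ∈ F₁ <;>
    simp only [Set.piecewise_eq_of_mem, Set.piecewise_eq_of_notMem, h₁₁, h₂₁, not_false_eq_true]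
  · exact h₁ f₁ h₁₁ f₂ h₂₁ hne hx
  · exact mixed f₁ h₁₁ f₂ hf₂ h₂₁ hne hx
  · exact (mixed f₂ h₂₁ f₁ hf₁ h₁₁ hne.symm (hx.imp fun _ => And.symm)).symm
  · exact h₂ f₁ (hf₁.resolve_left h₁₁) f₂ (hf₂.resolve_left h₂₁) hne hx

end ProperEdgeColoring

namespace SimpleGraph

variable {V : Type*} (G : SimpleGraph V)

theorem image_edgeSet_induce (S : Set V) :
    Sym2.map (↑) '' (G.induce S).edgeSet = G.edgeSet ∩ S.sym2 := by
  have hpre : (G.induce S).edgeSet = Sym2.map (↑) ⁻¹' G.edgeSet := by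
    ext e; induction e using Sym2.ind; rfl
  have hrange : Set.range (Sym2.map ((↑) : S → V)) = S.sym2 := by
    rw [← Set.image_univ, ← Set.sym2_univ, ← Set.sym2_image, Set.image_univ, Subtype.range_coe]
  rw [hpre, Set.image_preimage_eq_inter_range, hrange]

end SimpleGraph

theorem hasProperListEdgeColoring_iff {V : Type*} (G : SimpleGraph V) (k : ℕ)
    (L : Sym2 V → Finset (Fin k)) :
    HasProperListEdgeColoring G k L ↔
      ∃ c : Sym2 V → Fin k, (∀ e ∈ G.edgeSet, c e ∈ L e) ∧ IsProperEdgeColoringOn G.edgeSet c :=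
  Iff.rfl

theorem hasProperListEdgeColoring_induce_iff {V : Type*} (G : SimpleGraph V) {S : Set V}
    (hS : S.Nonempty) {k : ℕ} (M : Sym2 V → Finset (Fin k)) :
    HasProperListEdgeColoring (G.induce S) k (fun e => M (e.map (↑))) ↔
      ∃ c : Sym2 V → Fin k, (∀ f ∈ G.edgeSet ∩ S.sym2, c f ∈ M f) ∧
        IsProperEdgeColoringOn (G.edgeSet ∩ S.sym2) c := by
  have hinj := Sym2.map.injective (Subtype.val_injective (p := (· ∈ S)))
  simp only [hasProperListEdgeColoring_iff, ← G.image_edgeSet_induce S, Set.forall_mem_image,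
    isProperEdgeColoringOn_image_iff Subtype.val_injective]
  constructor
  · rintro ⟨c, hc⟩
    obtain ⟨x, hx⟩ := hS
    obtain ⟨c', rfl⟩ := hinj.surjective_comp_right' (fun _ => c s(⟨x, hx⟩, ⟨x, hx⟩)) c
    exact ⟨c', hc⟩
  · rintro ⟨c, hc⟩
    exact ⟨c ∘ Sym2.map (↑), hc⟩

section PendantSubgraph

variable {V : Type*} {G : SimpleGraph V} {v w : V} {T : Set V}

theorem edgeSet_subset_sym2_union_of_unique_crossing (hw : w ∈ T)
    (huniq : ∀ a b : V, G.Adj a b → a ∈ T → b ∉ T → s(a, b) = s(v, w)) :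
    G.edgeSet ⊆ (T ∪ {v}).sym2 ∪ (Tᶜ ∪ {w}).sym2 := by
  intro e
  induction e using Sym2.ind with | _ a b => ?_
  intro hab
  by_cases ha : a ∈ T <;> by_cases hb : b ∈ T
  · simp [ha, hb]
  · simp [huniq a b hab ha hb, hw]
  · rw [Sym2.eq_swap, huniq b a hab.symm hb ha]
    simp [hw]
  · simp [ha, hb]

theorem eq_of_shares_vertex_of_unique_crossing (hw : w ∈ T) (hv : v ∉ T)
    (huniq : ∀ a b : V, G.Adj a b → a ∈ T → b ∉ T → s(a, b) = s(v, w)) :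
    ∀ f₁ ∈ G.edgeSet ∩ (T ∪ {v}).sym2, ∀ f₂ ∈ G.edgeSet ∩ (Tᶜ ∪ {w}).sym2,
      f₂ ∉ G.edgeSet ∩ (T ∪ {v}).sym2 → (∃ x : V, x ∈ f₁ ∧ x ∈ f₂) → f₁ = s(v, w) := by
  rintro f₁ ⟨hf₁, hf₁A⟩ f₂ ⟨hf₂, -⟩ hf₂A ⟨x, hx₁, hx₂⟩
  obtain ⟨a, rfl⟩ := Sym2.mem_iff_exists.mp hx₁
  obtain ⟨y, rfl⟩ := Sym2.mem_iff_exists.mp hx₂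
  simp only [Set.mem_inter_iff, Set.mk_mem_sym2_iff, not_and] at hf₁A hf₂A
  have hy : y ∉ T ∪ {v} := hf₂A hf₂ hf₁A.1
  -- the shared vertex is `v`, whose only neighbour in `T ∪ {v}` is `w`
  by_cases hxT : x ∈ T
  · have := huniq x y hf₂ hxT (fun h => hy (Or.inl h))
    simp only [Sym2.eq_iff] at this
    rcases this with ⟨-, rfl⟩ | ⟨-, rfl⟩ <;> simp_all
  · obtain rfl : x = v := by simpa [hxT] using hf₁A.1
    have haT : a ∈ T := by simpa [(G.ne_of_adj hf₁).symm] using hf₁A.2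
    rw [Sym2.eq_swap]
    exact huniq a x (G.adj_symm hf₁) haT hxT

theorem hasProperListEdgeColoring_of_unique_crossing [DecidableEq V] {k : ℕ}
    {L : Sym2 V → Finset (Fin k)} (hadj : G.Adj v w) (hw : w ∈ T) (hv : v ∉ T)
    (huniq : ∀ a b : V, G.Adj a b → a ∈ T → b ∉ T → s(a, b) = s(v, w))
    {c₁ c₂ : Sym2 V → Fin k}
    (hc₁L : ∀ f ∈ G.edgeSet ∩ (T ∪ {v}).sym2, c₁ f ∈ if f = s(v, w) then {c₂ s(v, w)} else L f)
    (hc₁ : IsProperEdgeColoringOn (G.edgeSet ∩ (T ∪ {v}).sym2) c₁)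
    (hc₂L : ∀ f ∈ G.edgeSet ∩ (Tᶜ ∪ {w}).sym2, f ≠ s(v, w) → c₂ f ∈ L f)
    (hc₂ : IsProperEdgeColoringOn (G.edgeSet ∩ (Tᶜ ∪ {w}).sym2) c₂)
    (he : c₂ s(v, w) ∈ L s(v, w)) :
    HasProperListEdgeColoring G k L := by
  classical
  have he₁ : s(v, w) ∈ G.edgeSet ∩ (T ∪ {v}).sym2 := ⟨hadj, by simp [hw]⟩
  have he₂ : s(v, w) ∈ G.edgeSet ∩ (Tᶜ ∪ {w}).sym2 := ⟨hadj, by simp [hv]⟩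
  have hcover := edgeSet_subset_sym2_union_of_unique_crossing hw huniq
  refine ⟨(G.edgeSet ∩ (T ∪ {v}).sym2).piecewise c₁ c₂, fun f hf => ?_, ?_⟩
  · by_cases hf₁ : f ∈ G.edgeSet ∩ (T ∪ {v}).sym2
    · rw [Set.piecewise_eq_of_mem _ _ _ hf₁]
      have := hc₁L f hf₁
      split_ifs at this with hfe
      · rwa [Finset.mem_singleton.mp this, hfe]
      · exact this
    · rw [Set.piecewise_eq_of_notMem _ _ _ hf₁]
      exact hc₂L f ⟨hf, (hcover hf).resolve_left fun h => hf₁ ⟨hf, h⟩⟩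
        (by rintro rfl; exact hf₁ he₁)
  · have hce : c₁ s(v, w) = c₂ s(v, w) := by simpa using hc₁L _ he₁
    have := hc₁.piecewise hc₂ he₂ hce (eq_of_shares_vertex_of_unique_crossing hw hv huniq)
    rwa [← Set.inter_union_distrib_left, Set.inter_eq_left.mpr hcover] at this

end PendantSubgraph

theorem hasProperListEdgeColoring_prune_tree_general {V : Type*} [DecidableEq V]
    (G : SimpleGraph V) (k : ℕ) (L : Sym2 V → Finset (Fin k))
    (v w : V) (hadj : G.Adj v w) (V_T : Set V) (hw : w ∈ V_T) (hv : v ∉ V_T)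
    (huniq : ∀ a b : V, G.Adj a b → a ∈ V_T → b ∉ V_T → s(a, b) = s(v, w))
    (L' : Finset (Fin k))
    (hL' : ∀ i : Fin k, i ∈ L' ↔ i ∈ L s(v, w) ∧
      HasProperListEdgeColoring (SimpleGraph.induce (V_T ∪ {v}) G) k
        (fun e' => if Sym2.map Subtype.val e' = s(v, w) then {i}
          else L (Sym2.map Subtype.val e'))) :
    HasProperListEdgeColoring G k L ↔
      HasProperListEdgeColoring (SimpleGraph.induce (V_Tᶜ ∪ {w}) G) k
        (fun e' => if Sym2.map Subtype.val e' = s(v, w) then L'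
          else L (Sym2.map Subtype.val e')) := by
  have hL'_iff (i : Fin k) : i ∈ L' ↔ i ∈ L s(v, w) ∧ ∃ c : Sym2 V → Fin k,
      (∀ f ∈ G.edgeSet ∩ (V_T ∪ {v}).sym2, c f ∈ if f = s(v, w) then {i} else L f) ∧
        IsProperEdgeColoringOn (G.edgeSet ∩ (V_T ∪ {v}).sym2) c := by
    rw [hL', hasProperListEdgeColoring_induce_iff G ⟨v, Or.inr rfl⟩
      fun f => if f = s(v, w) then {i} else L f]
  rw [hasProperListEdgeColoring_iff,
    hasProperListEdgeColoring_induce_iff G ⟨v, Or.inl hv⟩ fun f => if f = s(v, w) then L' else L f]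
  constructor
  · rintro ⟨c, hcL, hc⟩
    refine ⟨c, fun f hf => ?_, hc.mono Set.inter_subset_left⟩
    split_ifs with hfe
    · subst hfe
      refine (hL'_iff _).mpr ⟨hcL _ hadj, c, fun f hf => ?_, hc.mono Set.inter_subset_left⟩
      split_ifs with h
      · simp [h]
      · exact hcL f hf.1
    · exact hcL f hf.1
  · rintro ⟨c, hcL, hc⟩
    have hi : c s(v, w) ∈ L' := by simpa using hcL s(v, w) ⟨hadj, by simp [hv]⟩
    obtain ⟨he, cT, hcTL, hcT⟩ := (hL'_iff _).mp hi
    exact hasProperListEdgeColoring_of_unique_crossing hadj hw hv huniq hcTL hcT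
      (fun f hf hfe => by simpa [hfe] using hcL f hf) hc he

/-- Pruning a pendant tree: if `e = {v, w}` is the unique edge of `G` with exactly one endpoint
in `V_T` (namely `w ∈ V_T`, `v ∉ V_T`), and the induced subgraph on `V_T ∪ {v}` is a tree, then
`G` admits a proper list edge coloring for the lists `L` if and only if the induced subgraph on
`(V ∖ V_T) ∪ {w}` admits one for the lists where `e` receives the list `L'` of colors `i` such
that the tree admits a proper list edge coloring in which `e` has list `{i}`. -/
theorem hasProperListEdgeColoring_prune_tree {V : Type*} [DecidableEq V]
    (G : SimpleGraph V) (k : ℕ) (hk : 1 ≤ k) (L : Sym2 V → Finset (Fin k))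
    (v w : V) (hadj : G.Adj v w) (V_T : Set V) (hw : w ∈ V_T) (hv : v ∉ V_T)
    (huniq : ∀ a b : V, G.Adj a b → a ∈ V_T → b ∉ V_T → s(a, b) = s(v, w))
    (htree : (SimpleGraph.induce (V_T ∪ {v}) G).IsTree)
    (L' : Finset (Fin k))
    (hL' : ∀ i : Fin k, i ∈ L' ↔ i ∈ L s(v, w) ∧
      HasProperListEdgeColoring (SimpleGraph.induce (V_T ∪ {v}) G) k
        (fun e' => if Sym2.map Subtype.val e' = s(v, w) then {i}
          else L (Sym2.map Subtype.val e'))) :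
    HasProperListEdgeColoring G k L ↔
      HasProperListEdgeColoring (SimpleGraph.induce (V_Tᶜ ∪ {w}) G) k
        (fun e' => if Sym2.map Subtype.val e' = s(v, w) then L'
          else L (Sym2.map Subtype.val e')) :=
  hasProperListEdgeColoring_prune_tree_general G k L v w hadj V_T hw hv huniq L' hL'
end

section
/- If p ≥ 2 and p ≡ 2 (mod 3), then the path P_p has a dominating set of size (p+1)/3 containing the endpoint 1, it has a dominating set of size (p+1)/3 containing the endpoint p, and no dominating set of P_p of size (p+1)/3 contains both endpoints 1 and p. -/
open SimpleGraph Finset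

section

variable {V W : Type*} {G : SimpleGraph V} {H : SimpleGraph W} {D : Finset V}

theorem IsDominatingSet.map (e : G ≃g H) (hD : IsDominatingSet G D) :
    IsDominatingSet H (D.map e.toEquiv.toEmbedding) := by
  intro w
  obtain ⟨v, rfl⟩ := e.surjective w
  rcases hD v with hv | ⟨u, hu, huv⟩
  · exact .inl (mem_map_of_mem _ hv)
  · exact .inr ⟨e u, mem_map_of_mem _ hu, e.map_adj_iff.mpr huv⟩

theorem IsDominatingSet.card_le_sum_degree [Fintype V] [DecidableRel G.Adj]
    (hD : IsDominatingSet G D) : Fintype.card V ≤ ∑ d ∈ D, (G.degree d + 1) := by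
  classical
  have hcover : (univ : Finset V) ⊆ D.biUnion fun d ↦ insert d (G.neighborFinset d) := by
    intro v _
    rcases hD v with hv | ⟨u, hu, huv⟩
    · exact mem_biUnion.mpr ⟨v, hv, mem_insert_self v _⟩
    · exact mem_biUnion.mpr ⟨u, hu, mem_insert_of_mem ((G.mem_neighborFinset u v).mpr huv)⟩
  calc Fintype.card V ≤ #(D.biUnion fun d ↦ insert d (G.neighborFinset d)) :=
        card_le_card hcover
    _ ≤ ∑ d ∈ D, #(insert d (G.neighborFinset d)) := card_biUnion_le
    _ ≤ ∑ d ∈ D, (G.degree d + 1) := sum_le_sum fun d _ ↦ card_insert_le d _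

end

namespace SimpleGraph

instance (n : ℕ) : DecidableRel (pathGraph n).Adj := fun _ _ ↦ decidable_of_iff' _ pathGraph_adj

def pathGraphRevIso (n : ℕ) : pathGraph n ≃g pathGraph n where
  toEquiv := Fin.revPerm
  map_rel_iff' {u v} := by simp only [Fin.revPerm_apply, pathGraph_adj, Fin.val_rev]; omega

variable {n : ℕ}

theorem degree_pathGraph_le_card {v : Fin n} (t : Finset ℕ)
    (ht : ∀ u : Fin n, (pathGraph n).Adj v u → u.val ∈ t) :
    (pathGraph n).degree v ≤ #t := by
  rw [← card_neighborFinset_eq_degree]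
  refine card_le_card_of_injOn Fin.val (fun u hu ↦ ?_) Fin.val_injective.injOn
  exact ht u ((mem_neighborFinset _ v u).mp hu)

theorem degree_pathGraph_le_two (v : Fin n) : (pathGraph n).degree v ≤ 2 :=
  (degree_pathGraph_le_card {v.val - 1, v.val + 1} fun u huv ↦ by
    simp only [mem_insert, mem_singleton]; rw [pathGraph_adj] at huv; omega).trans card_le_two

theorem degree_pathGraph_le_one_of_val_eq_zero {v : Fin n} (hv : v.val = 0) :
    (pathGraph n).degree v ≤ 1 :=
  degree_pathGraph_le_card {1} fun u huv ↦ by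
    rw [mem_singleton]; rw [pathGraph_adj] at huv; omega

theorem degree_pathGraph_le_one_of_val_add_one_eq {v : Fin n} (hv : v.val + 1 = n) :
    (pathGraph n).degree v ≤ 1 :=
  degree_pathGraph_le_card {n - 2} fun u huv ↦ by
    rw [mem_singleton]; rw [pathGraph_adj] at huv; omega

theorem _root_.IsDominatingSet.add_two_le_three_mul_card_pathGraph {D : Finset (Fin n)}
    (hD : IsDominatingSet (pathGraph n) D) {v w : Fin n} (hv : v.val = 0) (hw : w.val + 1 = n)
    (hvw : v ≠ w) (hvD : v ∈ D) (hwD : w ∈ D) : n + 2 ≤ 3 * #D := by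
  have hwD' : w ∈ D.erase v := mem_erase_of_ne_of_mem hvw.symm hwD
  have hcard : #((D.erase v).erase w) + 2 = #D := by
    rw [← card_erase_add_one hvD, ← card_erase_add_one hwD']
  have hsum := calc
    n ≤ ∑ d ∈ D, ((pathGraph n).degree d + 1) := by
      simpa using hD.card_le_sum_degree
    _ = ((pathGraph n).degree v + 1) + (((pathGraph n).degree w + 1) +
          ∑ d ∈ (D.erase v).erase w, ((pathGraph n).degree d + 1)) := by
      rw [← add_sum_erase _ _ hvD, ← add_sum_erase _ _ hwD']
    _ ≤ 2 + (2 + #((D.erase v).erase w) • 3) := by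
      gcongr
      · exact Nat.succ_le_succ (degree_pathGraph_le_one_of_val_eq_zero hv)
      · exact Nat.succ_le_succ (degree_pathGraph_le_one_of_val_add_one_eq hw)
      · exact sum_le_card_nsmul _ _ _ fun d _ ↦ Nat.succ_le_succ (degree_pathGraph_le_two d)
  rw [smul_eq_mul] at hsum
  omega

theorem card_filter_val_mod_three_eq_zero (n : ℕ) :
    #{v : Fin n | v.val % 3 = 0} = (n + 2) / 3 := by
  have h := Nat.count_modEq_card n (r := 3) (by norm_num) 0
  rw [Nat.count_eq_card_filter_range, ← Nat.Iio_eq_range, ← Fin.map_valEmbedding_univ,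
    filter_map, card_map] at h
  rw [show (n + 2) / 3 = n / 3 + if 0 % 3 < n % 3 then 1 else 0 by split_ifs <;> omega, ← h]
  rfl

theorem isDominatingSet_pathGraph_filter_val_mod_three_eq_zero (hn : n % 3 ≠ 0) :
    IsDominatingSet (pathGraph n) {v | v.val % 3 = 0} := by
  intro v
  simp only [mem_filter_univ, pathGraph_adj]
  have hv := v.isLt
  rcases (by omega : v.val % 3 = 0 ∨ v.val % 3 = 1 ∨ v.val % 3 = 2) with h | h | h
  · exact .inl h
  · exact .inr ⟨⟨v.val - 1, by omega⟩, by simp only; omega, by simp only; omega⟩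
  · exact .inr ⟨⟨v.val + 1, by omega⟩, by simp only; omega, by simp⟩

end SimpleGraph

/-- If `p ≥ 2` and `p ≡ 2 (mod 3)`, the path on `p` vertices has a dominating set of size
`(p + 1) / 3` containing the first endpoint, one of that size containing the last endpoint,
but no dominating set of that size contains both endpoints. -/
theorem pathGraph_dominatingSet_mod_two (p : ℕ) (hmod : p % 3 = 2) :
    (∃ D : Finset (Fin p), IsDominatingSet (SimpleGraph.pathGraph p) D ∧
      D.card = (p + 1) / 3 ∧ (⟨0, by omega⟩ : Fin p) ∈ D) ∧
    (∃ D : Finset (Fin p), IsDominatingSet (SimpleGraph.pathGraph p) D ∧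
      D.card = (p + 1) / 3 ∧ (⟨p - 1, by omega⟩ : Fin p) ∈ D) ∧
    ∀ D : Finset (Fin p), IsDominatingSet (SimpleGraph.pathGraph p) D →
      D.card = (p + 1) / 3 →
      ¬((⟨0, by omega⟩ : Fin p) ∈ D ∧ (⟨p - 1, by omega⟩ : Fin p) ∈ D) := by
  set D₀ : Finset (Fin p) := {v | v.val % 3 = 0}
  have hD₀ : IsDominatingSet (pathGraph p) D₀ :=
    isDominatingSet_pathGraph_filter_val_mod_three_eq_zero (by omega)
  have hcard : #D₀ = (p + 1) / 3 := by
    rw [card_filter_val_mod_three_eq_zero]; omega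
  refine ⟨⟨D₀, hD₀, hcard, by simp [D₀]⟩,
    ⟨_, hD₀.map (pathGraphRevIso p), by rwa [card_map], ?_⟩, ?_⟩
  · exact mem_map_of_mem _ (show (⟨0, by omega⟩ : Fin p) ∈ D₀ by simp [D₀])
  · rintro D hD hDcard ⟨h0, h1⟩
    have hbound := hD.add_two_le_three_mul_card_pathGraph rfl (by simp only; omega)
      (by simp [Fin.ext_iff]; omega) h0 h1
    omega
end

section
/- Let k, t, h be nonnegative integers with t ≥ 1 and h + t ≤ k, and let L_1, …, L_t ⊆ {1, …, k} be lists such that there exist pairwise distinct colors c_1, …, c_t with c_j ∈ L_j for each j ∈ [t]. Then the family B = { B ⊆ {1, …, k} : |B| = h and there exist pairwise distinct c_1, …, c_t with c_j ∈ L_j ∖ B for all j ∈ [t] } is nonempty and is the collection of bases of a matroid on the ground set {1, …, k}. -/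
/-!
The sets `X` for which the lists `L j ∖ X` keep a system of distinct representatives are the sets
avoiding some transversal of `L`, i.e. the independent sets of the dual of the transversal matroid
of `L`, and `𝓑` is the set of bases of its truncation at rank `h`; `h + t ≤ k` provides a member.

Augmentation comes from Hall's theorem. Call `S` tight for `I` if `|N(S) ∖ I| = |S|`, where
`N(S) = ⋃_{j ∈ S} L j`. By submodularity of `S ↦ |N(S) ∖ I|`, tight sets are closed under union,
so there is a largest one, `T`. If `insert e I` violates Hall's condition, then `e ∈ N(S)` for a
tight `S ⊆ T`. Hence if no `e ∈ J ∖ I` can be added to `I`, then `J ∖ I ⊆ N(T)`, and `|I| < |J|`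
forces `|N(T) ∖ J| < |N(T) ∖ I| = |T|`, violating Hall's condition for `J`.
-/

/-- `B` is a member of the family `𝓑`: it has `h` elements and the lists `L_1 ∖ B, …, L_t ∖ B`
still admit a system of distinct representatives. -/
def IsExtensionBasis {k t : ℕ} (L : Fin t → Finset (Fin k)) (h : ℕ) (B : Set (Fin k)) : Prop :=
  B.ncard = h ∧ ∃ c : Fin t → Fin k, Function.Injective c ∧ ∀ j, c j ∈ L j ∧ c j ∉ B

open Finset

def HasSDRAvoiding {ι α : Type*} (L : ι → Finset α) (X : Set α) : Prop :=
  ∃ c : ι → α, Function.Injective c ∧ ∀ j, c j ∈ L j ∧ c j ∉ X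

section Hall

variable {ι α : Type*} [DecidableEq α] {L : ι → Finset α}

theorem hasSDRAvoiding_iff_forall_card_le (X : Finset α) :
    HasSDRAvoiding L X ↔ ∀ S : Finset ι, #S ≤ #(S.biUnion L \ X) := by
  have hN (S : Finset ι) : S.biUnion (fun j => L j \ X) = S.biUnion L \ X := by
    ext; simp only [mem_biUnion, mem_sdiff]; tauto
  simp_rw [← hN, all_card_le_biUnion_card_iff_exists_injective, mem_sdiff, HasSDRAvoiding,
    mem_coe]

variable (L) in
def IsHallTight (X : Finset α) (S : Finset ι) : Prop :=
  #(S.biUnion L \ X) = #S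

theorem card_sdiff_lt_card_sdiff_of_sdiff_subset {N I J : Finset α} (hJI : J \ I ⊆ N)
    (hIJ : #I < #J) : #(N \ J) < #(N \ I) := by
  have hJ : #(N \ J) ≤ #(N \ (I ∪ J)) + #(I \ J) :=
    (card_le_card fun x => by simp only [mem_sdiff, mem_union]; tauto).trans (card_union_le _ _)
  have hI : N \ I = N \ (I ∪ J) ∪ J \ I := by
    ext x; have := @hJI x; simp only [mem_sdiff, mem_union] at this ⊢; tauto
  have hdisj : Disjoint (N \ (I ∪ J)) (J \ I) :=
    disjoint_left.2 fun x => by simp only [mem_sdiff, mem_union]; tauto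
  rw [hI, card_union_of_disjoint hdisj]
  have := card_sdiff_lt_card_sdiff_iff.2 hIJ
  omega

theorem exists_isHallTight_mem_biUnion_of_not_insert {X : Finset α}
    (hX : ∀ S : Finset ι, #S ≤ #(S.biUnion L \ X)) {e : α}
    (he : ¬ ∀ S : Finset ι, #S ≤ #(S.biUnion L \ insert e X)) :
    ∃ S, IsHallTight L X S ∧ e ∈ S.biUnion L \ X := by
  push Not at he
  obtain ⟨S, hS⟩ := he
  rw [sdiff_insert] at hS
  have hmem : e ∈ S.biUnion L \ X := by
    by_contra hne
    rw [erase_eq_of_notMem hne] at hS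
    exact (hX S).not_gt hS
  have := card_erase_of_mem hmem
  have := hX S
  exact ⟨S, by unfold IsHallTight; omega, hmem⟩

section Tight

variable [DecidableEq ι] {X : Finset α}

theorem IsHallTight.union (hX : ∀ S : Finset ι, #S ≤ #(S.biUnion L \ X)) {S S' : Finset ι}
    (hS : IsHallTight L X S) (hS' : IsHallTight L X S') : IsHallTight L X (S ∪ S') := by
  have hunion : (S ∪ S').biUnion L \ X = (S.biUnion L \ X) ∪ (S'.biUnion L \ X) := by
    rw [union_biUnion, union_sdiff_distrib]
  have hinter : (S ∩ S').biUnion L \ X ⊆ (S.biUnion L \ X) ∩ (S'.biUnion L \ X) :=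
    (sdiff_subset_sdiff (subset_inter (biUnion_subset_biUnion_of_subset_left L inter_subset_left)
      (biUnion_subset_biUnion_of_subset_left L inter_subset_right)) le_rfl).trans inf_sdiff.le
  have := card_le_card hinter
  have := card_union_add_card_inter (S.biUnion L \ X) (S'.biUnion L \ X)
  have := card_union_add_card_inter S S'
  have := hX (S ∪ S')
  have := hX (S ∩ S')
  unfold IsHallTight at *
  rw [hunion] at *
  omega

theorem exists_isHallTight_forall_subset [Fintype ι]
    (hX : ∀ S : Finset ι, #S ≤ #(S.biUnion L \ X)) :
    ∃ T, IsHallTight L X T ∧ ∀ S, IsHallTight L X S → S ⊆ T := by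
  classical
  refine ⟨(univ.filter (IsHallTight L X)).sup id, ?_, fun S hS => ?_⟩
  · refine sup_induction (by simp [IsHallTight]) (fun _ h₁ _ h₂ => h₁.union hX h₂) ?_
    exact fun S hS => (mem_filter.1 hS).2
  · exact le_sup (f := id) (mem_filter.2 ⟨mem_univ S, hS⟩)

end Tight

theorem HasSDRAvoiding.exists_insert [Fintype ι] {I J : Finset α} (hI : HasSDRAvoiding L I)
    (hJ : HasSDRAvoiding L J) (hIJ : #I < #J) :
    ∃ e ∈ J, e ∉ I ∧ HasSDRAvoiding L ↑(insert e I) := by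
  classical
  rw [hasSDRAvoiding_iff_forall_card_le] at hI hJ
  by_contra! hnot
  obtain ⟨T, hT, hTmax⟩ := exists_isHallTight_forall_subset hI
  have hJI : J \ I ⊆ T.biUnion L := by
    intro e he
    rw [mem_sdiff] at he
    have hfail := hnot e he.1 he.2
    rw [hasSDRAvoiding_iff_forall_card_le] at hfail
    obtain ⟨S, hS, heS⟩ := exists_isHallTight_mem_biUnion_of_not_insert hI hfail
    exact biUnion_subset_biUnion_of_subset_left L (hTmax S hS) (mem_sdiff.1 heS).1
  have := card_sdiff_lt_card_sdiff_of_sdiff_subset hJI hIJ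
  have := hJ T
  unfold IsHallTight at hT
  omega

end Hall

theorem Matroid.isBase_iff_indep_and_ncard_eq {α : Type*} {M : Matroid α} [M.RankFinite] {h : ℕ}
    (hle : ∀ I, M.Indep I → I.ncard ≤ h) (hex : ∃ I, M.Indep I ∧ I.ncard = h) {B : Set α} :
    M.IsBase B ↔ M.Indep B ∧ B.ncard = h := by
  obtain ⟨I₀, hI₀, rfl⟩ := hex
  obtain ⟨B₀, hB₀, hI₀B₀⟩ := hI₀.exists_isBase_superset
  have hB₀card : B₀.ncard = I₀.ncard :=
    (hle B₀ hB₀.indep).antisymm (Set.ncard_le_ncard hI₀B₀ hB₀.finite)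
  refine ⟨fun hB => ⟨hB.indep, hB₀card ▸ hB.ncard_eq_ncard_of_isBase hB₀⟩, fun ⟨hB, hBcard⟩ => ?_⟩
  obtain ⟨B', hB', hBB'⟩ := hB.exists_isBase_superset
  have hB'card : B'.ncard ≤ B.ncard := hBcard ▸ hle B' hB'.indep
  rwa [Set.eq_of_subset_of_ncard_le hBB' hB'card hB'.finite]

section Truncation

variable {ι α : Type*} [Fintype ι] [Finite α]

theorem HasSDRAvoiding.exists_insert_of_ncard_lt {L : ι → Finset α} {I J : Set α}
    (hI : HasSDRAvoiding L I) (hJ : HasSDRAvoiding L J) (hIJ : I.ncard < J.ncard) :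
    ∃ e ∈ J, e ∉ I ∧ HasSDRAvoiding L (insert e I) := by
  classical
  lift I to Finset α using I.toFinite
  lift J to Finset α using J.toFinite
  rw [Set.ncard_coe_finset, Set.ncard_coe_finset] at hIJ
  simpa using hI.exists_insert hJ hIJ

def sdrAvoidingMatroid (L : ι → Finset α) (hL : HasSDRAvoiding L ∅) (h : ℕ) : Matroid α :=
  (IndepMatroid.ofFinite Set.finite_univ (fun X => X.ncard ≤ h ∧ HasSDRAvoiding L X)
    ⟨by simp, hL⟩
    (fun _ _ ⟨hJh, c, hc, hcL⟩ hIJ => ⟨(Set.ncard_le_ncard hIJ).trans hJh, c, hc,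
      fun j => ⟨(hcL j).1, fun hj => (hcL j).2 (hIJ hj)⟩⟩)
    (fun _ _ ⟨_, hI⟩ ⟨hJh, hJ⟩ hIJ => by
      obtain ⟨e, heJ, heI, he⟩ := hI.exists_insert_of_ncard_lt hJ hIJ
      exact ⟨e, heJ, heI, (Set.ncard_insert_of_notMem heI).trans_le (hIJ.trans_le hJh), he⟩)
    (fun _ _ => Set.subset_univ _)).matroid

variable {L : ι → Finset α} {hL : HasSDRAvoiding L ∅} {h : ℕ}

instance : (sdrAvoidingMatroid L hL h).Finite := ⟨Set.finite_univ⟩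

@[simp] theorem sdrAvoidingMatroid_E : (sdrAvoidingMatroid L hL h).E = Set.univ := rfl

@[simp] theorem sdrAvoidingMatroid_indep_iff {X : Set α} :
    (sdrAvoidingMatroid L hL h).Indep X ↔ X.ncard ≤ h ∧ HasSDRAvoiding L X := by
  simp [sdrAvoidingMatroid]

theorem exists_ncard_eq_hasSDRAvoiding (hL : HasSDRAvoiding L ∅)
    (hh : h + Fintype.card ι ≤ Nat.card α) : ∃ B : Set α, B.ncard = h ∧ HasSDRAvoiding L B := by
  obtain ⟨c, hc, hcL⟩ := hL
  have hcompl : h ≤ (Set.range c)ᶜ.ncard := by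
    rw [← Set.ncard_add_ncard_compl (Set.range c), Set.ncard_range_of_injective hc,
      Nat.card_eq_fintype_card] at hh
    omega
  obtain ⟨B, hBc, hB⟩ := Set.exists_subset_card_eq hcompl
  exact ⟨B, hB, c, hc, fun j => ⟨(hcL j).1, fun hj => hBc hj ⟨j, rfl⟩⟩⟩

theorem sdrAvoidingMatroid_isBase_iff (hh : h + Fintype.card ι ≤ Nat.card α) {B : Set α} :
    (sdrAvoidingMatroid L hL h).IsBase B ↔ B.ncard = h ∧ HasSDRAvoiding L B := by
  obtain ⟨B₀, hB₀⟩ := exists_ncard_eq_hasSDRAvoiding hL hh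
  rw [Matroid.isBase_iff_indep_and_ncard_eq (fun I hI => (sdrAvoidingMatroid_indep_iff.1 hI).1)
    ⟨B₀, sdrAvoidingMatroid_indep_iff.2 ⟨hB₀.1.le, hB₀.2⟩, hB₀.1⟩, sdrAvoidingMatroid_indep_iff]
  grind

end Truncation

theorem extensionBases_form_matroid_general (k t h : ℕ) (hhtk : h + t ≤ k)
    (L : Fin t → Finset (Fin k))
    (hSDR : ∃ c : Fin t → Fin k, Function.Injective c ∧ ∀ j, c j ∈ L j) :
    (∃ B : Set (Fin k), IsExtensionBasis L h B) ∧
    ∃ M : Matroid (Fin k), M.E = Set.univ ∧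
      ∀ B : Set (Fin k), M.IsBase B ↔ IsExtensionBasis L h B := by
  obtain ⟨c, hc, hcL⟩ := hSDR
  have hL : HasSDRAvoiding L ∅ := ⟨c, hc, fun j => ⟨hcL j, Set.notMem_empty _⟩⟩
  have hcard : h + Fintype.card (Fin t) ≤ Nat.card (Fin k) := by simpa using hhtk
  exact ⟨exists_ncard_eq_hasSDRAvoiding hL hcard, sdrAvoidingMatroid L hL h,
    sdrAvoidingMatroid_E, fun B => sdrAvoidingMatroid_isBase_iff hcard⟩

/-- Let `t ≥ 1`, `h + t ≤ k`, and suppose the lists `L_1, …, L_t ⊆ {1, …, k}` admit a system of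
distinct representatives.  Then the family of sets `B ⊆ {1, …, k}` of size `h` such that the
lists `L_1 ∖ B, …, L_t ∖ B` still admit a system of distinct representatives is nonempty, and
it is the collection of bases of a matroid on the ground set `{1, …, k}`. -/
theorem extensionBases_form_matroid (k t h : ℕ) (ht : 1 ≤ t) (hhtk : h + t ≤ k)
    (L : Fin t → Finset (Fin k))
    (hSDR : ∃ c : Fin t → Fin k, Function.Injective c ∧ ∀ j, c j ∈ L j) :
    (∃ B : Set (Fin k), IsExtensionBasis L h B) ∧
    ∃ M : Matroid (Fin k), M.E = Set.univ ∧
      ∀ B : Set (Fin k), M.IsBase B ↔ IsExtensionBasis L h B :=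
  extensionBases_form_matroid_general k t h hhtk L hSDR
end
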